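/- Let G be a finite connected simple graph with positive edge weights, let r, s, m, n be vertices with {m,n} ∈ E(G), and suppose that the weighted spanning tree sums through edge {m,n} in the two directions balance: N*(r, m→n, s) = N*(r, n→m, s). Then for the failure of edge k = {r,s} (assuming k ∈ E(G) and G − k connected) under any balanced injection vector P, the flow on edge {m,n} is unchanged: F'_{mn} = F_{mn}, where F are the flows in G with injection P and F' the flows in G − k with the same injection P. -/

import Mathlib

open scoped Classical

/-- `T` is a spanning tree of `G`. -/
def IsSpanningTreeOf {V : Type*} (G T : SimpleGraph V) : Prop := T ≤ G ∧ T.IsTree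

/-- The weight of a spanning tree: the product of the weights of its edges. -/
noncomputable def treeWeight {V : Type*} [Fintype V] [DecidableEq V]
    (w : Sym2 V → ℝ) (T : SimpleGraph V) : ℝ :=
  ∏ e ∈ T.edgeFinset, w e

/-- The (unique, since `T` is a tree) path in `T` from `s` to `t` traverses the
edge `{a,b}` in the direction from `a` to `b`. -/
def TraversesDir {V : Type*} (T : SimpleGraph V) (s t a b : V) : Prop :=
  ∃ p : T.Walk s t, p.IsPath ∧ ∃ d ∈ p.darts, d.toProd = (a, b)

/-- `N*(s, a→b, t)`: the sum of the weights of the spanning trees of `G` whose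
unique `s`–`t` path traverses the edge `{a,b}` from `a` to `b`. -/
noncomputable def stSumDir {V : Type*} [Fintype V] [DecidableEq V]
    (G : SimpleGraph V) (w : Sym2 V → ℝ) (s a b t : V) : ℝ :=
  ∑ T ∈ Finset.univ.filter (fun T => IsSpanningTreeOf G T ∧ TraversesDir T s t a b),
    treeWeight w T

/-- The weighted Laplacian `L = B W Bᵀ` of `G`, written out entrywise. -/
noncomputable def wLap {V : Type*} [Fintype V] [DecidableEq V]
    (G : SimpleGraph V) (w : Sym2 V → ℝ) : Matrix V V ℝ :=
  Matrix.of fun u v =>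
    if u = v then ∑ x ∈ Finset.univ.filter (fun x => G.Adj u x), w s(u, x)
    else if G.Adj u v then -w s(u, v) else 0

/-!
Write `H = G - k`, `κ` for the total weight of the spanning trees of `H`, and
`I = w_k (V_r - V_s)` for the flow on `k` before the failure. Since `L_G = L_H + w_k b_k b_kᵀ`,
the change of potential `U = V' - V` solves `L_H U = I (e_r - e_s)`.

The matrix-tree argument gives an explicit solution of `L_H ψ = κ (e_r - e_s)`: let `ψ v` be the
total weight of the spanning forests of `H` with two trees, separating `r` from `s`, in which `v`
lies with `r`. Deleting the edge `{a,b}` from a spanning tree whose `r`–`s` path runs from `a` to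
`b` is a bijection onto the forests with `a` beside `r` and `b` beside `s`, so
`w_ab (ψ_a - ψ_b) = N*(r, a→b, s) - N*(r, b→a, s)`, and summing over the neighbours of `u` counts
each tree with the net flow of its `r`–`s` path out of `u`.

By the maximum principle `κ U - I ψ`, which `L_H` kills, is constant on the connected graph `H`;
hence `κ w_mn (U_m - U_n) = I w_mn (ψ_m - ψ_n)`, which is zero by the balance hypothesis, because
the only trees of `G` using `k` on their `r`–`s` path are those where that path is `k` itself.
Balance also rules out `{m,n} = k`, as `N*(r, r→s, s) > 0 = N*(r, s→r, s)`.
-/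

open SimpleGraph Finset
open scoped Matrix

namespace SimpleGraph

variable {V : Type*} {G : SimpleGraph V}

theorem Walk.IsPath.fst_ne_end_of_mem_darts {u v : V} {p : G.Walk u v} (hp : p.IsPath)
    {d : G.Dart} (hd : d ∈ p.darts) : d.fst ≠ v := by
  induction p with
  | nil => simp at hd
  | cons h q ih =>
    rw [Walk.cons_isPath_iff] at hp
    rcases List.mem_cons.mp hd with rfl | hd
    · rintro rfl
      exact hp.2 q.end_mem_support
    · exact ih hp.1 hd

theorem Walk.IsPath.reachable_deleteEdges_fst_of_mem_darts [DecidableEq V] {u v : V}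
    {p : G.Walk u v} (hp : p.IsPath) {d : G.Dart} (hd : d ∈ p.darts) :
    (G.deleteEdges {d.edge}).Reachable u d.fst := by
  have hmem := p.dart_fst_mem_support_of_mem_darts hd
  have hsplit := p.take_spec hmem
  have hd_drop : d ∈ (p.dropUntil d.fst hmem).darts := by
    rw [← hsplit, Walk.darts_append] at hd
    exact (List.mem_append.mp hd).resolve_left fun h =>
      (hp.takeUntil hmem).fst_ne_end_of_mem_darts h rfl
  have hnodup := hp.isTrail.edges_nodup
  rw [← hsplit, Walk.edges_append] at hnodup
  refine reachable_deleteEdges_iff_exists_walk.mpr ⟨p.takeUntil d.fst hmem, fun h => ?_⟩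
  exact List.disjoint_of_nodup_append hnodup h
    (List.mem_map_of_mem (f := Dart.edge) hd_drop)

theorem Connected.reachable_deleteEdges_or [DecidableEq V] (hG : G.Connected) {x y : V}
    (hxy : G.Adj x y) (v : V) :
    (G.deleteEdges {s(x, y)}).Reachable v x ∨ (G.deleteEdges {s(x, y)}).Reachable v y := by
  obtain ⟨P, hP⟩ := hG.exists_isPath v x
  by_cases he : s(x, y) ∈ P.edges
  · have hy := P.snd_mem_support_of_mem_edges he
    have hx := Walk.endpoint_notMem_support_takeUntil hP hy hxy.ne
    exact .inr <| reachable_deleteEdges_iff_exists_walk.mpr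
      ⟨P.takeUntil y hy, fun h => hx ((P.takeUntil y hy).fst_mem_support_of_mem_edges h)⟩
  · exact .inl <| reachable_deleteEdges_iff_exists_walk.mpr ⟨P, he⟩

theorem deleteEdges_sup_edge {F : SimpleGraph V} {a b : V} (h : ¬F.Adj a b) :
    (F ⊔ edge a b).deleteEdges {s(a, b)} = F := by
  simpa [deleteEdges_sup] using h

theorem Walk.sum_map_darts_fst_sub_snd {R : Type*} [Ring R] [DecidableEq V] {r s : V}
    (p : G.Walk r s) (u : V) :
    (p.darts.map fun d => (if d.fst = u then 1 else 0) - (if d.snd = u then 1 else 0 : R)).sum =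
      (Pi.single r 1 - Pi.single s 1 : V → R) u := by
  induction p with
  | nil => simp
  | cons h q ih =>
    rw [Walk.darts_cons, List.map_cons, List.sum_cons, ih]
    simp only [Pi.sub_apply, Pi.single_apply, eq_comm (a := u)]
    abel

end SimpleGraph

theorem Finset.sum_ite_mem_sub_ite_mem {V R : Type*} [Fintype V] [DecidableEq V] [Ring R]
    (S : Finset (V × V)) (u : V) :
    ∑ v, ((if (u, v) ∈ S then 1 else 0) - (if (v, u) ∈ S then 1 else 0) : R) =
      ∑ e ∈ S, ((if e.1 = u then 1 else 0) - (if e.2 = u then 1 else 0)) := by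
  have hsplit : ∀ a b : V,
      (if (a, b) ∈ S then (if a = u then 1 else 0) - (if b = u then 1 else 0) else 0 : R) =
        (if a = u then (if (a, b) ∈ S then 1 else 0) else 0) -
          (if b = u then (if (a, b) ∈ S then 1 else 0) else 0) := by
    intro a b
    split_ifs <;> simp
  rw [← Fintype.sum_ite_mem S, Fintype.sum_prod_type]
  simp only [hsplit, sum_sub_distrib, sum_ite_eq', mem_univ, if_true]
  conv_rhs => rw [Fintype.sum_eq_single u fun a ha => by simp [ha]]
  simp

section

variable {V : Type*}

theorem TraversesDir.adj {T : SimpleGraph V} {r s a b : V} (h : TraversesDir T r s a b) :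
    T.Adj a b := by
  obtain ⟨-, -, ⟨_, hadj⟩, -, rfl⟩ := h
  exact hadj

theorem TraversesDir.eq_of_adj {T : SimpleGraph V} (hT : T.IsTree) {r s a b : V}
    (htr : TraversesDir T r s a b) (hrs : T.Adj r s) : (a, b) = (r, s) := by
  obtain ⟨p, hp, d, hd, hdab⟩ := htr
  obtain ⟨q, -, hq⟩ := hT.existsUnique_path r s
  have hpath : (Walk.cons hrs .nil).IsPath := by simp [hrs.ne]
  rw [hq p hp, ← hq _ hpath] at hd
  simp only [Walk.darts_cons, Walk.darts_nil, List.mem_singleton] at hd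
  rw [← hdab, hd]

/-- Kirchhoff's current law for the unit `r`–`s` flow along the path of a spanning tree. -/
theorem SimpleGraph.IsTree.sum_traversesDir_sub {R : Type*} [Ring R] [Fintype V] [DecidableEq V]
    {T : SimpleGraph V} (hT : T.IsTree) (r s u : V) :
    ∑ v, ((if TraversesDir T r s u v then 1 else 0) - (if TraversesDir T r s v u then 1 else 0)) =
      (Pi.single r 1 - Pi.single s 1 : V → R) u := by
  obtain ⟨p, hp, hpu⟩ := hT.existsUnique_path r s
  set S := (p.darts.map Dart.toProd).toFinset
  have htrav : ∀ a b, TraversesDir T r s a b ↔ (a, b) ∈ S := by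
    intro a b
    simp only [S, List.mem_toFinset, List.mem_map]
    constructor
    · rintro ⟨q, hq, d, hd, h⟩
      exact ⟨d, hpu q hq ▸ hd, h⟩
    · rintro ⟨d, hd, h⟩
      exact ⟨p, hp, d, hd, h⟩
  simp only [htrav]
  rw [sum_ite_mem_sub_ite_mem, List.sum_toFinset _
    ((Walk.darts_nodup_of_support_nodup hp.support_nodup).map Dart.toProd_injective), List.map_map]
  exact p.sum_map_darts_fst_sub_snd u

/-- A spanning 2-forest of `H` separating `r` from `s`. -/
structure IsSeparatingForest (H F : SimpleGraph V) (r s : V) : Prop where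
  le : F ≤ H
  isAcyclic : F.IsAcyclic
  not_reachable : ¬F.Reachable r s
  reachable_or : ∀ v, F.Reachable v r ∨ F.Reachable v s

namespace IsSeparatingForest

variable {H F : SimpleGraph V} {r s : V}

theorem reachable_iff_not (hF : IsSeparatingForest H F r s) (v : V) :
    F.Reachable v r ↔ ¬F.Reachable v s :=
  ⟨fun hr hs => hF.not_reachable (hr.symm.trans hs), (hF.reachable_or v).resolve_right⟩

theorem not_reachable_of_reachable (hF : IsSeparatingForest H F r s) {a b : V}
    (ha : F.Reachable a r) (hb : F.Reachable b s) : ¬F.Reachable a b :=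
  fun h => hF.not_reachable ((ha.symm.trans h).trans hb)

end IsSeparatingForest

theorem IsSpanningTreeOf.isSeparatingForest_deleteEdges [DecidableEq V] {H T : SimpleGraph V}
    {r s a b : V} (hT : IsSpanningTreeOf H T) (htr : TraversesDir T r s a b) :
    IsSeparatingForest H (T.deleteEdges {s(a, b)}) r s ∧
      (T.deleteEdges {s(a, b)}).Reachable a r ∧ (T.deleteEdges {s(a, b)}).Reachable b s := by
  obtain ⟨p, hp, d, hd, hdab⟩ := htr
  obtain ⟨rfl, rfl⟩ := Prod.ext_iff.mp hdab
  have hra : (T.deleteEdges {d.edge}).Reachable r d.fst :=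
    hp.reachable_deleteEdges_fst_of_mem_darts hd
  have hsb : (T.deleteEdges {d.edge}).Reachable s d.snd := by
    simpa [Sym2.eq_swap] using hp.reverse.reachable_deleteEdges_fst_of_mem_darts
      (Walk.mem_darts_reverse.mpr (by simpa using hd) : d.symm ∈ p.reverse.darts)
  have hbridge : ¬(T.deleteEdges {d.edge}).Reachable d.fst d.snd :=
    isAcyclic_iff_forall_adj_isBridge.mp hT.2.isAcyclic d.adj
  refine ⟨⟨(deleteEdges_le _).trans hT.1, hT.2.isAcyclic.anti (deleteEdges_le _),
    fun h => hbridge ((hra.symm.trans h).trans hsb), fun v => ?_⟩, hra.symm, hsb.symm⟩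
  exact (hT.2.connected.reachable_deleteEdges_or d.adj v).imp
    (·.trans hra.symm) (·.trans hsb.symm)

theorem IsSeparatingForest.isSpanningTreeOf_sup_edge [DecidableEq V] {H F : SimpleGraph V}
    {r s a b : V} (hF : IsSeparatingForest H F r s) (hab : H.Adj a b) (ha : F.Reachable a r)
    (hb : F.Reachable b s) :
    IsSpanningTreeOf H (F ⊔ edge a b) ∧ TraversesDir (F ⊔ edge a b) r s a b := by
  set T := F ⊔ edge a b
  have hnab := hF.not_reachable_of_reachable ha hb
  have hdel : T.deleteEdges {s(a, b)} = F := deleteEdges_sup_edge fun h => hnab h.reachable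
  have hTab : T.Adj a b := Or.inr ((edge_adj ..).mpr ⟨.inl ⟨rfl, rfl⟩, hab.ne⟩)
  have hTr : ∀ v, T.Reachable v r := fun v =>
    (hF.reachable_or v).elim (·.mono le_sup_left) fun hv =>
      ((hv.trans hb.symm).mono le_sup_left).trans (hTab.symm.reachable.trans (ha.mono le_sup_left))
  have hT : IsSpanningTreeOf H T :=
    ⟨sup_le hF.le ((edge_le_iff H).mpr (.inr hab)),
      ⟨(connected_iff_exists_forall_reachable T).mpr ⟨r, fun v => (hTr v).symm⟩,
        hF.isAcyclic.sup_edge_of_not_reachable hnab⟩⟩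
  refine ⟨hT, ?_⟩
  obtain ⟨p, hp⟩ := hT.2.connected.exists_isPath r s
  have hedge : s(a, b) ∈ p.edges := by
    by_contra h
    exact hF.not_reachable (hdel ▸ reachable_deleteEdges_iff_exists_walk.mpr ⟨p, h⟩)
  obtain ⟨d, hd, hde⟩ := List.mem_map.mp (p.edges_eq_map_darts ▸ hedge)
  have hrd := hp.reachable_deleteEdges_fst_of_mem_darts hd
  rw [hde, hdel] at hrd
  rcases Sym2.eq_iff.mp hde with ⟨h1, h2⟩ | ⟨h1, -⟩
  · exact ⟨p, hp, d, hd, Prod.ext h1 h2⟩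
  · exact absurd (ha.trans (h1 ▸ hrd)) hnab

variable [Fintype V] [DecidableEq V]

theorem treeWeight_pos {H T : SimpleGraph V} {w : Sym2 V → ℝ} (hw : ∀ e ∈ H.edgeSet, 0 < w e)
    (hT : T ≤ H) : 0 < treeWeight w T :=
  prod_pos fun _ he => hw _ (edgeSet_mono hT (mem_edgeFinset.mp he))

theorem sum_treeWeight_pos {H : SimpleGraph V} {w : Sym2 V → ℝ} (hw : ∀ e ∈ H.edgeSet, 0 < w e)
    {P : SimpleGraph V → Prop} [DecidablePred P] (hP : ∀ T, P T → T ≤ H) (hex : ∃ T, P T) :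
    0 < ∑ T with P T, treeWeight w T := by
  obtain ⟨T, hT⟩ := hex
  exact sum_pos' (fun T hT => (treeWeight_pos hw (hP T (mem_filter.mp hT).2)).le)
    ⟨T, mem_filter.mpr ⟨mem_univ _, hT⟩, treeWeight_pos hw (hP T hT)⟩

theorem treeWeight_sup_edge (w : Sym2 V → ℝ) {F : SimpleGraph V}
    {a b : V} (h : ¬F.Adj a b) (hab : a ≠ b) :
    treeWeight w (F ⊔ edge a b) = w s(a, b) * treeWeight w F := by
  rw [treeWeight, treeWeight, ← prod_cons (f := w) (by simpa using h)]
  congr 1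
  ext e
  simp [edgeSet_edge_of_ne hab, or_comm]

/-- Deleting the traversed edge `{a,b}` is a bijection onto the separating forests that put
`a` on the side of `r` and `b` on the side of `s`. -/
theorem stSumDir_eq_mul_sum_forests (H : SimpleGraph V)
    (w : Sym2 V → ℝ) {r s a b : V} (hab : H.Adj a b) :
    stSumDir H w r a b s = w s(a, b) * ∑ F with IsSeparatingForest H F r s ∧
      F.Reachable a r ∧ F.Reachable b s, treeWeight w F := by
  rw [stSumDir, mul_sum]
  symm
  refine sum_nbij' (· ⊔ edge a b) (·.deleteEdges {s(a, b)}) ?_ ?_ ?_ ?_ ?_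
  · intro F hF
    simp only [mem_filter, mem_univ, true_and] at hF ⊢
    exact hF.1.isSpanningTreeOf_sup_edge hab hF.2.1 hF.2.2
  · intro T hT
    simp only [mem_filter, mem_univ, true_and] at hT ⊢
    exact hT.1.isSeparatingForest_deleteEdges hT.2
  · intro F hF
    simp only [mem_filter, mem_univ, true_and] at hF
    exact deleteEdges_sup_edge fun h => hF.1.not_reachable_of_reachable hF.2.1 hF.2.2 h.reachable
  · intro T hT
    simp only [mem_filter, mem_univ, true_and] at hT
    exact sdiff_sup_cancel ((edge_le_iff T).mpr (.inr hT.2.adj))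
  · intro F hF
    simp only [mem_filter, mem_univ, true_and] at hF
    exact (treeWeight_sup_edge w
      (fun h => hF.1.not_reachable_of_reachable hF.2.1 hF.2.2 h.reachable) hab.ne).symm

theorem stSumDir_eq_zero_of_not_adj {H : SimpleGraph V} (w : Sym2 V → ℝ) {r s a b : V}
    (h : ¬H.Adj a b) : stSumDir H w r a b s = 0 :=
  sum_eq_zero fun _ hT => absurd ((mem_filter.mp hT).2.1.1 (mem_filter.mp hT).2.2.adj) h

theorem stSumDir_end_eq_zero (G : SimpleGraph V) (w : Sym2 V → ℝ) (r b s : V) :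
    stSumDir G w r s b s = 0 := by
  refine sum_eq_zero fun T hT => ?_
  obtain ⟨p, hp, d, hd, hds⟩ := (mem_filter.mp hT).2.2
  exact absurd (congrArg Prod.fst hds) (hp.fst_ne_end_of_mem_darts hd)

theorem stSumDir_edge_pos {G : SimpleGraph V} {w : Sym2 V → ℝ} (hw : ∀ e ∈ G.edgeSet, 0 < w e)
    (hG : G.Connected) {r s : V} (hrs : G.Adj r s) : 0 < stSumDir G w r r s s := by
  have hacyc : (edge r s).IsAcyclic := by
    simpa using isAcyclic_bot.sup_edge_of_not_reachable (reachable_bot.not.mpr hrs.ne)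
  obtain ⟨T, hrsT, hTG, hT⟩ :=
    hG.exists_isTree_le_of_le_of_isAcyclic ((edge_le_iff G).mpr (.inr hrs)) hacyc
  have hTrs : T.Adj r s := hrsT ((edge_adj ..).mpr ⟨.inl ⟨rfl, rfl⟩, hrs.ne⟩)
  rw [stSumDir]
  refine sum_treeWeight_pos (P := fun T => IsSpanningTreeOf G T ∧ TraversesDir T r s r s) hw
    (fun T hT => hT.1.1) ⟨T, ⟨hTG, hT⟩, ?_⟩
  exact ⟨.cons hTrs .nil, by simp [hrs.ne], ⟨(r, s), hTrs⟩, by simp, rfl⟩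

theorem stSumDir_ne_swap_of_eq_edge {G : SimpleGraph V} {w : Sym2 V → ℝ}
    (hw : ∀ e ∈ G.edgeSet, 0 < w e) (hG : G.Connected) {r s m n : V} (hrs : G.Adj r s)
    (hk : s(m, n) = s(r, s)) : stSumDir G w r m n s ≠ stSumDir G w r n m s := by
  have hpos := stSumDir_edge_pos hw hG hrs
  rcases Sym2.eq_iff.mp hk with ⟨rfl, rfl⟩ | ⟨rfl, rfl⟩
  · exact (stSumDir_end_eq_zero G w _ _ _).symm ▸ hpos.ne'
  · exact (stSumDir_end_eq_zero G w _ _ _).symm ▸ hpos.ne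

theorem stSumDir_deleteEdges_of_ne (G : SimpleGraph V) (w : Sym2 V → ℝ) {r s a b : V}
    (hab : s(a, b) ≠ s(r, s)) :
    stSumDir (G.deleteEdges {s(r, s)}) w r a b s = stSumDir G w r a b s := by
  refine sum_congr (filter_congr fun T _ => ?_) fun _ _ => rfl
  refine ⟨fun ⟨⟨hle, hT⟩, htr⟩ => ⟨⟨hle.trans (deleteEdges_le _), hT⟩, htr⟩,
    fun ⟨⟨hle, hT⟩, htr⟩ => ⟨⟨le_sdiff.mpr ⟨hle, (disjoint_edge T).mpr fun hrs => ?_⟩, hT⟩, htr⟩⟩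
  obtain ⟨rfl, rfl⟩ := Prod.ext_iff.mp (htr.eq_of_adj hT hrs)
  exact hab rfl

theorem wLap_mulVec_apply (H : SimpleGraph V) (w : Sym2 V → ℝ) (x : V → ℝ) (u : V) :
    (wLap H w *ᵥ x) u = ∑ v, if H.Adj u v then w s(u, v) * (x u - x v) else 0 := by
  have hterm : ∀ v, wLap H w u v * x v =
      (if u = v then (∑ z with H.Adj u z, w s(u, z)) * x u else 0) +
        if H.Adj u v then -w s(u, v) * x v else 0 := by
    intro v
    by_cases huv : u = v
    · subst huv
      simp [wLap]
    · simp [wLap, huv]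
  rw [Matrix.mulVec, dotProduct, sum_congr rfl fun v _ => hterm v, sum_add_distrib, sum_ite_eq,
    if_pos (mem_univ _), sum_filter, sum_mul, ← sum_add_distrib]
  refine sum_congr rfl fun v _ => ?_
  split_ifs <;> ring

theorem wLap_mulVec_sub_deleteEdges (G : SimpleGraph V) (w : Sym2 V → ℝ) {r s : V}
    (hrs : G.Adj r s) (x : V → ℝ) :
    wLap G w *ᵥ x - wLap (G.deleteEdges {s(r, s)}) w *ᵥ x =
      (w s(r, s) * (x r - x s)) • (Pi.single r 1 - Pi.single s 1) := by
  ext u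
  simp only [Pi.sub_apply, wLap_mulVec_apply, ← sum_sub_distrib, deleteEdges_adj,
    Set.mem_singleton_iff, Pi.smul_apply, Pi.single_apply, smul_eq_mul]
  have hterm : ∀ v, ((if G.Adj u v then w s(u, v) * (x u - x v) else 0) -
      if G.Adj u v ∧ ¬s(u, v) = s(r, s) then w s(u, v) * (x u - x v) else 0) =
      if s(u, v) = s(r, s) then w s(u, v) * (x u - x v) else 0 := by
    intro v
    by_cases h : s(u, v) = s(r, s)
    · have huv : G.Adj u v := by rwa [← mem_edgeSet, h]
      simp [h, huv]
    · by_cases huv : G.Adj u v <;> simp [h, huv]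
  rw [sum_congr rfl fun v _ => hterm v]
  rcases eq_or_ne u r with rfl | hur
  · simp [hrs.ne]
  rcases eq_or_ne u s with rfl | hus
  · simp [hur, Sym2.eq_swap]
    ring
  · simp [hur, hus]

/-- Maximum principle: at a maximum of `x` every neighbour takes the same value. -/
theorem eq_of_wLap_mulVec_eq_zero {H : SimpleGraph V} {w : Sym2 V → ℝ}
    (hw : ∀ e ∈ H.edgeSet, 0 < w e) (hH : H.Connected) {x : V → ℝ} (hx : wLap H w *ᵥ x = 0)
    (u v : V) : x u = x v := by
  have : Nonempty V := hH.nonempty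
  obtain ⟨u₀, hu₀⟩ := Finite.exists_max x
  have hstep : ∀ a b, H.Adj a b → x a = x u₀ → x b = x u₀ := by
    intro a b hab ha
    have hnonneg : ∀ c ∈ univ, 0 ≤ if H.Adj a c then w s(a, c) * (x a - x c) else 0 := by
      intro c _
      split_ifs with hac
      · exact mul_nonneg (hw _ hac).le (by linarith [hu₀ c])
      · exact le_rfl
    have h0 := (sum_eq_zero_iff_of_nonneg hnonneg).mp
      (by rw [← wLap_mulVec_apply, hx, Pi.zero_apply]) b (mem_univ b)
    rw [if_pos hab] at h0
    have := (mul_eq_zero.mp h0).resolve_left (hw _ hab).ne'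
    linarith
  have hwalk : ∀ {a b : V} (p : H.Walk a b), x a = x u₀ → x b = x u₀ := by
    intro a b p
    induction p with
    | nil => exact id
    | cons h _ ih => exact fun ha => ih (hstep _ _ h ha)
  rw [hwalk (hH.preconnected u₀ u).some rfl, hwalk (hH.preconnected u₀ v).some rfl]

/-- Up to the factor `κ(H)`, the potential of a unit current from `r` to `s` in `H`. -/
noncomputable def forestPotential (H : SimpleGraph V) (w : Sym2 V → ℝ) (r s v : V) : ℝ :=
  ∑ F with IsSeparatingForest H F r s ∧ F.Reachable v r, treeWeight w F

theorem forestPotential_sub (H : SimpleGraph V) (w : Sym2 V → ℝ) (r s a b : V) :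
    forestPotential H w r s a - forestPotential H w r s b =
      (∑ F with IsSeparatingForest H F r s ∧ F.Reachable a r ∧ F.Reachable b s, treeWeight w F) -
        ∑ F with IsSeparatingForest H F r s ∧ F.Reachable b r ∧ F.Reachable a s,
          treeWeight w F := by
  simp only [forestPotential, sum_filter, ← sum_sub_distrib]
  refine sum_congr rfl fun F _ => ?_
  by_cases hF : IsSeparatingForest H F r s
  · simp only [hF, true_and, hF.reachable_iff_not]
    split_ifs <;> simp_all
  · simp [hF]

theorem weight_mul_forestPotential_sub (H : SimpleGraph V) (w : Sym2 V → ℝ) (r s : V)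
    {a b : V} (hab : H.Adj a b) :
    w s(a, b) * (forestPotential H w r s a - forestPotential H w r s b) =
      stSumDir H w r a b s - stSumDir H w r b a s := by
  rw [forestPotential_sub, stSumDir_eq_mul_sum_forests H w hab,
    stSumDir_eq_mul_sum_forests H w hab.symm, Sym2.eq_swap, mul_sub]

theorem wLap_mulVec_forestPotential (H : SimpleGraph V) (w : Sym2 V → ℝ) (r s : V) :
    wLap H w *ᵥ forestPotential H w r s =
      (∑ T with IsSpanningTreeOf H T, treeWeight w T) • (Pi.single r 1 - Pi.single s 1) := by
  ext u
  rw [wLap_mulVec_apply, Pi.smul_apply, smul_eq_mul]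
  calc ∑ v, (if H.Adj u v then
          w s(u, v) * (forestPotential H w r s u - forestPotential H w r s v) else 0)
      = ∑ v, (stSumDir H w r u v s - stSumDir H w r v u s) := by
        refine sum_congr rfl fun v _ => ?_
        split_ifs with h
        · exact weight_mul_forestPotential_sub H w r s h
        · rw [stSumDir_eq_zero_of_not_adj w h, stSumDir_eq_zero_of_not_adj w (mt Adj.symm h),
            sub_self]
    _ = ∑ v, ∑ T with IsSpanningTreeOf H T, treeWeight w T *
          ((if TraversesDir T r s u v then 1 else 0) -
            (if TraversesDir T r s v u then 1 else 0)) := by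
        simp only [stSumDir, ← filter_filter, sum_filter (s := filter _ _), ← sum_sub_distrib,
          mul_sub, mul_ite, mul_one, mul_zero]
    _ = _ := by
        rw [sum_comm, sum_mul]
        refine sum_congr rfl fun T hT => ?_
        rw [← mul_sum, (mem_filter.mp hT).2.2.sum_traversesDir_sub]

end

theorem balanced_tree_sums_no_flow_change_general
    {V : Type*} [Fintype V] [DecidableEq V] (G : SimpleGraph V)
    (w : Sym2 V → ℝ) (hw : ∀ e ∈ G.edgeSet, 0 < w e)
    (hG : G.Connected) (r s m n : V) (hmn : G.Adj m n) (hrs : G.Adj r s)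
    (hGk : (G.deleteEdges {s(r, s)}).Connected)
    (hbal : stSumDir G w r m n s = stSumDir G w r n m s)
    (P : V → ℝ)
    (Vp : V → ℝ) (hVp : Matrix.mulVec (wLap G w) Vp = P)
    (Vp' : V → ℝ) (hVp' : Matrix.mulVec (wLap (G.deleteEdges {s(r, s)}) w) Vp' = P) :
    w s(m, n) * (Vp' m - Vp' n) = w s(m, n) * (Vp m - Vp n) := by
  have hk : s(m, n) ≠ s(r, s) := fun hk => stSumDir_ne_swap_of_eq_edge hw hG hrs hk hbal
  set H := G.deleteEdges {s(r, s)}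
  have hwH : ∀ e ∈ H.edgeSet, 0 < w e := fun e he => hw e (edgeSet_mono (deleteEdges_le _) he)
  set κ := ∑ T with IsSpanningTreeOf H T, treeWeight w T
  set I := w s(r, s) * (Vp r - Vp s)
  set ψ := forestPotential H w r s
  have hκ : 0 < κ :=
    let ⟨T, hTH, hT⟩ := hGk.exists_isTree_le
    sum_treeWeight_pos hwH (fun _ hT => hT.1) ⟨T, hTH, hT⟩
  have hΔ : wLap H w *ᵥ (Vp' - Vp) = I • (Pi.single r 1 - Pi.single s 1) := by
    rw [Matrix.mulVec_sub, hVp', ← hVp, wLap_mulVec_sub_deleteEdges G w hrs]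
  have hconst := eq_of_wLap_mulVec_eq_zero hwH hGk (x := κ • (Vp' - Vp) - I • ψ) (by
    rw [Matrix.mulVec_sub, Matrix.mulVec_smul, Matrix.mulVec_smul, hΔ,
      wLap_mulVec_forestPotential, smul_smul, smul_smul, mul_comm, sub_self]) m n
  have hψ : w s(m, n) * (ψ m - ψ n) = 0 := by
    rw [weight_mul_forestPotential_sub H w r s ((deleteEdges_adj ..).mpr ⟨hmn, hk⟩),
      stSumDir_deleteEdges_of_ne G w hk,
      stSumDir_deleteEdges_of_ne G w (by rwa [Sym2.eq_swap]), hbal, sub_self]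
  simp only [Pi.sub_apply, Pi.smul_apply, smul_eq_mul] at hconst
  have hflow : κ * (w s(m, n) * (Vp' m - Vp' n) - w s(m, n) * (Vp m - Vp n)) = 0 := by
    linear_combination w s(m, n) * hconst + I * hψ
  exact sub_eq_zero.mp ((mul_eq_zero.mp hflow).resolve_left hκ.ne')

/-- **Balanced spanning-tree sums suppress flow changes.**  Let `G` be a
finite connected simple graph with positive edge weights, let `r, s, m, n` be
vertices with `{m,n} ∈ E(G)`, and suppose the weighted spanning-tree sums
through `{m,n}` in the two directions balance:
`N*(r, m→n, s) = N*(r, n→m, s)`.  Then for the failure of the edge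
`k = {r,s} ∈ E(G)` (with `G - k` connected) under any balanced injection `P`,
the flow on the edge `{m,n}` is unchanged: `F'_{mn} = F_{mn}`. -/
theorem balanced_tree_sums_no_flow_change
    {V : Type*} [Fintype V] [DecidableEq V] (G : SimpleGraph V)
    (w : Sym2 V → ℝ) (hw : ∀ e ∈ G.edgeSet, 0 < w e)
    (hG : G.Connected) (r s m n : V) (hmn : G.Adj m n) (hrs : G.Adj r s)
    (hGk : (G.deleteEdges {s(r, s)}).Connected)
    (hbal : stSumDir G w r m n s = stSumDir G w r n m s)
    (P : V → ℝ) (hP : ∑ u, P u = 0)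
    (Vp : V → ℝ) (hVp : Matrix.mulVec (wLap G w) Vp = P)
    (Vp' : V → ℝ) (hVp' : Matrix.mulVec (wLap (G.deleteEdges {s(r, s)}) w) Vp' = P) :
    w s(m, n) * (Vp' m - Vp' n) = w s(m, n) * (Vp m - Vp n) :=
  balanced_tree_sums_no_flow_change_general G w hw hG r s m n hmn hrs hGk hbal P Vp hVp Vp' hVp'
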